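/- Let A : ℝⁿ → Matrix (Fin n) (Fin n) ℝ be continuous, and let x : [t₀, T] → ℝⁿ be a solution of ẋ = A(x)x. For a partition t₀ < t₁ < ⋯ < t_k = T define the Euler-exponential approximation by y₀ = x(t₀), y_{i+1} = e^{A(y_i)(t_{i+1}−t_i)} y_i. Then as the mesh max_i (t_i − t_{i−1}) → 0, the piecewise-defined approximation converges to x uniformly on [t₀, T]. -/

import Mathlib

/-!
On a step `[tᵢ, tᵢ₊₁]` the approximation `z s = exp ((s - tᵢ) • A yᵢ) *ᵥ yᵢ` solves the linear
equation `ż = A yᵢ *ᵥ z`, and `x` solves it up to the defect `(A (x s) - A yᵢ) *ᵥ x s`, of size at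
most `L * C * (‖yᵢ - x tᵢ‖ + w)`: here `L` is a Lipschitz constant and `M` a bound of `A` on the
closed `1`-neighbourhood of the trajectory, `C` bounds `‖x‖`, and `w` bounds the oscillation of `x`
over a mesh interval. Grönwall's inequality, with the initial error moved from the defect into the
growth rate, bounds the error after the step by `gronwallBound e (M + L * C) (L * C * w) h`, where
`e` is the error before it. These bounds compose along the partition, so the error at time `s` is
at most `gronwallBound 0 (M + L * C) (L * C * w) (s - t₀)`, which tends to `0` with `w`, hence
with the mesh. Keeping it below `1` keeps every `yᵢ` in the neighbourhood where `M` and `L` apply.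
-/

open Matrix Filter Set
open scoped NNReal Topology Matrix.Norms.Operator

theorem gronwallBound_eq_mul_exp_add (δ K ε x : ℝ) :
    gronwallBound δ K ε x = δ * Real.exp (K * x) + gronwallBound 0 K ε x := by
  by_cases hK : K = 0
  · simp [gronwallBound_K0, hK]
  · simp [gronwallBound_of_K_ne_0 hK]

theorem gronwallBound_le_gronwallBound_of_le {δ δ' K ε x : ℝ} (h : δ ≤ δ') :
    gronwallBound δ K ε x ≤ gronwallBound δ' K ε x := by
  rw [gronwallBound_eq_mul_exp_add δ, gronwallBound_eq_mul_exp_add δ']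
  gcongr

theorem gronwallBound_gronwallBound (δ K ε x y : ℝ) :
    gronwallBound (gronwallBound δ K ε x) K ε y = gronwallBound δ K ε (x + y) := by
  by_cases hK : K = 0
  · simp only [gronwallBound_K0, hK]; ring
  · simp only [gronwallBound_of_K_ne_0 hK, mul_add, Real.exp_add]
    field_simp
    ring

theorem gronwallBound_add_mul_le {δ K ε c x : ℝ} (hδ : 0 ≤ δ) (hK : 0 ≤ K) (hε : 0 ≤ ε)
    (hc : 0 ≤ c) (hx : 0 ≤ x) :
    gronwallBound δ K (ε + c * δ) x ≤ gronwallBound δ (K + c) ε x := by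
  set g := gronwallBound δ K (ε + c * δ)
  have hg : ∀ u, HasDerivAt g (K * g u + (ε + c * δ)) u := hasDerivAt_gronwallBound δ K _
  have hδg : ∀ u, 0 ≤ u → δ ≤ g u := fun u hu => by
    simpa [g, gronwallBound_x0] using gronwallBound_mono hδ (by positivity) hK hu
  simpa using le_gronwallBound_of_liminf_deriv_right_le (b := x)
    (fun u _ => (hg u).continuousAt.continuousWithinAt)
    (fun u _ _ hr => (hg u).hasDerivWithinAt.liminf_right_slope_le hr)
    (gronwallBound_x0 δ K _).le
    (fun u hu => by nlinarith [hδg u hu.1]) x ⟨hx, le_rfl⟩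

theorem Matrix.linfty_opNorm_le_sum_norm {m n α : Type*} [Fintype m] [Fintype n]
    [SeminormedAddCommGroup α] (M : Matrix m n α) : ‖M‖ ≤ ∑ i, ∑ j, ‖M i j‖ := by
  have h : ‖M‖₊ ≤ ∑ i, ∑ j, ‖M i j‖₊ := by
    rw [linfty_opNNNorm_def]
    exact Finset.sup_le fun i _ =>
      Finset.single_le_sum (f := fun i => ∑ j, ‖M i j‖₊) (fun _ _ => zero_le) (Finset.mem_univ i)
  simpa [← NNReal.coe_le_coe] using h

theorem Matrix.lipschitzOnWith_of_entries {X m n α : Type*} [PseudoMetricSpace X] [Fintype m]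
    [Fintype n] [SeminormedAddCommGroup α] {f : X → Matrix m n α} {s : Set X}
    {K : m → n → ℝ≥0} (hf : ∀ i j, LipschitzOnWith (K i j) (fun z => f z i j) s) :
    LipschitzOnWith (∑ i, ∑ j, K i j) f s := by
  refine LipschitzOnWith.of_dist_le_mul fun z hz w hw => ?_
  calc dist (f z) (f w) ≤ ∑ i, ∑ j, ‖(f z - f w) i j‖ := by
        rw [dist_eq_norm]; exact linfty_opNorm_le_sum_norm _
    _ ≤ ∑ i, ∑ j, K i j * dist z w := by
        gcongr with i _ j _
        simpa [dist_eq_norm] using (hf i j).dist_le_mul z hz w hw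
    _ = _ := by push_cast; simp [Finset.sum_mul]

theorem Matrix.exists_lipschitzOnWith_of_isCompact {X m n α : Type*} [PseudoMetricSpace X]
    [Fintype m] [Fintype n] [SeminormedAddCommGroup α] {f : X → Matrix m n α} {s : Set X}
    (hf : ∀ i j, LocallyLipschitz fun z => f z i j) (hs : IsCompact s) :
    ∃ K, LipschitzOnWith K f s := by
  choose K hK using fun i j => (hf i j).locallyLipschitzOn.exists_lipschitzOnWith_of_compact hs
  exact ⟨_, lipschitzOnWith_of_entries hK⟩

theorem hasDerivAt_exp_smul_sub_mulVec {ι : Type*} [Fintype ι] [DecidableEq ι]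
    (B : Matrix ι ι ℝ) (y : ι → ℝ) (a s : ℝ) :
    HasDerivAt (fun s => NormedSpace.exp ((s - a) • B) *ᵥ y)
      (B *ᵥ (NormedSpace.exp ((s - a) • B) *ᵥ y)) s := by
  have hexp : HasDerivAt (fun s : ℝ => NormedSpace.exp ((s - a) • B))
      (B * NormedSpace.exp ((s - a) • B)) s := by
    have h := (hasDerivAt_exp_smul_const' B (s - a)).scomp s ((hasDerivAt_id s).sub_const a)
    rwa [one_smul] at h
  rw [mulVec_mulVec]
  exact (LinearMap.toContinuousLinearMap ((mulVecBilin ℝ ℝ).flip y)).hasFDerivAt.comp_hasDerivAt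
    s hexp

theorem norm_exp_smul_mulVec_sub_le_gronwallBound {ι : Type*} [Fintype ι] [DecidableEq ι]
    {B : Matrix ι ι ℝ} {K : ℝ≥0} (hB : ‖B‖ ≤ K) {x x' : ℝ → ι → ℝ} {a b ε : ℝ}
    (hx : ∀ u ∈ Icc a b, HasDerivAt x (x' u) u) (hε : ∀ u ∈ Ico a b, ‖x' u - B *ᵥ x u‖ ≤ ε)
    (y : ι → ℝ) :
    ∀ s ∈ Icc a b,
      ‖NormedSpace.exp ((s - a) • B) *ᵥ y - x s‖ ≤ gronwallBound ‖y - x a‖ K ε (s - a) := by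
  have hLip : LipschitzWith K (B *ᵥ ·) := LipschitzWith.of_dist_le_mul fun v w => by
    simpa [dist_eq_norm, ← mulVec_sub] using
      (linfty_opNorm_mulVec B (v - w)).trans (by gcongr)
  have hz := hasDerivAt_exp_smul_sub_mulVec B y a
  simpa [dist_eq_norm] using dist_le_of_approx_trajectories_ODE (fun _ => hLip)
    (fun u _ => (hz u).continuousAt.continuousWithinAt) (fun u _ => (hz u).hasDerivWithinAt)
    (fun _ _ => (dist_self _).le)
    (fun u hu => (hx u hu).continuousAt.continuousWithinAt)
    (fun u hu => (hx u (Ico_subset_Icc_self hu)).hasDerivWithinAt)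
    (fun u hu => by simpa [dist_eq_norm] using hε u hu) (by simp [dist_eq_norm])

theorem exists_pos_gronwallBound_lt (K c x : ℝ) {η : ℝ} (hη : 0 < η) :
    ∃ w > 0, gronwallBound 0 K (c * w) x < η := by
  have hcont : Continuous fun w => gronwallBound 0 K (c * w) x :=
    (gronwallBound_continuous_ε 0 K x).comp (continuous_const.mul continuous_id)
  have hlim : Tendsto (fun w => gronwallBound 0 K (c * w) x) (𝓝[>] 0) (𝓝 0) := by
    simpa [ContinuousWithinAt, gronwallBound_ε0_δ0] using
      hcont.continuousWithinAt (s := Ioi 0) (x := 0)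
  exact ((hlim.eventually (gt_mem_nhds hη)).and self_mem_nhdsWithin).exists.imp
    fun w hw => ⟨hw.2, hw.1⟩

section EulerExponential

variable {ι : Type*} [Fintype ι] [DecidableEq ι] {A : (ι → ℝ) → Matrix ι ι ℝ} {x : ℝ → ι → ℝ}

theorem norm_euler_step_sub_le {S : Set (ι → ℝ)} {M L : ℝ≥0} {C w a b : ℝ}
    (hM : ∀ z ∈ S, ‖A z‖ ≤ M) (hL : LipschitzOnWith L A S)
    (hx : ∀ u ∈ Icc a b, HasDerivAt x (A (x u) *ᵥ x u) u) (hxS : ∀ u ∈ Icc a b, x u ∈ S)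
    (hxC : ∀ u ∈ Icc a b, ‖x u‖ ≤ C) (hxw : ∀ u ∈ Icc a b, ‖x u - x a‖ ≤ w)
    {y : ι → ℝ} (hy : y ∈ S) :
    ∀ s ∈ Icc a b, ‖NormedSpace.exp ((s - a) • A y) *ᵥ y - x s‖ ≤
      gronwallBound ‖y - x a‖ (M + L * C) (L * C * w) (s - a) := by
  intro s hs
  have ha : a ∈ Icc a b := ⟨le_rfl, hs.1.trans hs.2⟩
  have hC : 0 ≤ C := (norm_nonneg _).trans (hxC a ha)
  have hw : 0 ≤ w := (norm_nonneg _).trans (hxw a ha)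
  have hdefect : ∀ u ∈ Ico a b,
      ‖A (x u) *ᵥ x u - A y *ᵥ x u‖ ≤ L * C * w + L * C * ‖y - x a‖ := by
    intro u hu
    have hu := Ico_subset_Icc_self hu
    have hdist : ‖x u - y‖ ≤ w + ‖y - x a‖ := by
      simpa [norm_sub_rev (x a) y] using norm_sub_le_norm_sub_add_norm_sub (x u) (x a) y
        |>.trans (add_le_add_left (hxw u hu) _)
    rw [← sub_mulVec]
    calc ‖(A (x u) - A y) *ᵥ x u‖ ≤ ‖A (x u) - A y‖ * ‖x u‖ := linfty_opNorm_mulVec _ _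
      _ ≤ L * ‖x u - y‖ * C := by
          gcongr
          · simpa [dist_eq_norm] using hL.dist_le_mul _ (hxS u hu) _ hy
          · exact hxC u hu
      _ ≤ L * (w + ‖y - x a‖) * C := by gcongr
      _ = _ := by ring
  calc _ ≤ gronwallBound ‖y - x a‖ M (L * C * w + L * C * ‖y - x a‖) (s - a) :=
        norm_exp_smul_mulVec_sub_le_gronwallBound (hM y hy) hx hdefect y s hs
    _ ≤ _ := gronwallBound_add_mul_le (norm_nonneg _) M.2 (by positivity) (by positivity)
        (sub_nonneg.2 hs.1)

theorem norm_euler_exponential_sub_le {t₀ T δ w C : ℝ} {M L : ℝ≥0}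
    (hx : ∀ t ∈ Icc t₀ T, HasDerivAt x (A (x t) *ᵥ x t) t)
    (hM : ∀ z ∈ Metric.cthickening 1 (x '' Icc t₀ T), ‖A z‖ ≤ M)
    (hL : LipschitzOnWith L A (Metric.cthickening 1 (x '' Icc t₀ T)))
    (hC : ∀ t ∈ Icc t₀ T, ‖x t‖ ≤ C)
    (hxδ : ∀ u ∈ Icc t₀ T, ∀ v ∈ Icc t₀ T, dist u v ≤ δ → dist (x u) (x v) ≤ w)
    (hw : 0 ≤ w) (hG : gronwallBound 0 (M + L * C) (L * C * w) (T - t₀) ≤ 1)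
    {k : ℕ} {t : Fin (k + 1) → ℝ} (ht : Monotone t) (ht₀ : t 0 = t₀) (htT : t (Fin.last k) = T)
    (hmesh : ∀ i : Fin k, t i.succ - t i.castSucc ≤ δ)
    {y : Fin (k + 1) → ι → ℝ} (hy₀ : y 0 = x t₀)
    (hy : ∀ i : Fin k, y i.succ =
      NormedSpace.exp ((t i.succ - t i.castSucc) • A (y i.castSucc)) *ᵥ y i.castSucc) :
    ∀ i : Fin k, ∀ s ∈ Icc (t i.castSucc) (t i.succ),
      ‖NormedSpace.exp ((s - t i.castSucc) • A (y i.castSucc)) *ᵥ y i.castSucc - x s‖ ≤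
        gronwallBound 0 (M + L * C) (L * C * w) (T - t₀) := by
  set G := fun τ => gronwallBound 0 (M + L * C) (L * C * w) (τ - t₀)
  have htI (i : Fin (k + 1)) : t i ∈ Icc t₀ T :=
    ⟨ht₀ ▸ ht (Fin.zero_le i), htT ▸ ht (Fin.le_last i)⟩
  have hC0 : 0 ≤ C := (norm_nonneg _).trans (hC _ (htI 0))
  have hGmono : Monotone G := (gronwallBound_mono le_rfl (by positivity) (by positivity)).comp
    fun _ _ h => sub_le_sub_right h _
  have hstep : ∀ i : Fin k, ‖y i.castSucc - x (t i.castSucc)‖ ≤ G (t i.castSucc) →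
      ∀ s ∈ Icc (t i.castSucc) (t i.succ),
        ‖NormedSpace.exp ((s - t i.castSucc) • A (y i.castSucc)) *ᵥ y i.castSucc - x s‖ ≤
          G s := by
    intro i hi s hs
    have hsub : Icc (t i.castSucc) (t i.succ) ⊆ Icc t₀ T :=
      Icc_subset_Icc (htI _).1 (htI _).2
    have hxw : ∀ u ∈ Icc (t i.castSucc) (t i.succ), ‖x u - x (t i.castSucc)‖ ≤ w := fun u hu => by
      simpa [dist_eq_norm] using hxδ u (hsub hu) _ (htI _) <| by
        rw [Real.dist_eq, abs_of_nonneg (sub_nonneg.2 hu.1)]; linarith [hu.2, hmesh i]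
    have hyS : y i.castSucc ∈ Metric.cthickening 1 (x '' Icc t₀ T) :=
      Metric.mem_cthickening_of_dist_le _ _ _ _ (mem_image_of_mem x (htI _)) <| by
        rw [dist_eq_norm]; exact hi.trans ((hGmono (htI _).2).trans hG)
    calc _ ≤ gronwallBound ‖y i.castSucc - x (t i.castSucc)‖ (M + L * C) (L * C * w)
          (s - t i.castSucc) :=
          norm_euler_step_sub_le hM hL (fun u hu => hx u (hsub hu))
            (fun u hu => Metric.self_subset_cthickening _ (mem_image_of_mem x (hsub hu)))
            (fun u hu => hC u (hsub hu)) hxw hyS s hs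
      _ ≤ gronwallBound (G (t i.castSucc)) (M + L * C) (L * C * w) (s - t i.castSucc) :=
          gronwallBound_le_gronwallBound_of_le hi
      _ = G s := by simp only [G, gronwallBound_gronwallBound, sub_add_sub_cancel']
  have hnode (i : Fin (k + 1)) : ‖y i - x (t i)‖ ≤ G (t i) := by
    induction i using Fin.induction with
    | zero => simp [G, ht₀, hy₀, gronwallBound_x0]
    | succ i ih =>
      rw [hy i]
      exact hstep i ih _ ⟨ht (Fin.castSucc_le_succ i), le_rfl⟩
  exact fun i s hs => (hstep i (hnode _) s hs).trans (hGmono (hs.2.trans (htI _).2))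

end EulerExponential

theorem euler_exponential_approximation_converges_general (n : ℕ)
    (A : (Fin n → ℝ) → Matrix (Fin n) (Fin n) ℝ)
    (hAc : Continuous A) (hAl : ∀ i j, LocallyLipschitz fun z => A z i j)
    (t₀ T : ℝ)
    (x : ℝ → (Fin n → ℝ))
    (hx : ∀ t ∈ Icc t₀ T, HasDerivAt x (A (x t) *ᵥ x t) t) :
    ∀ ε > (0 : ℝ), ∃ δ > (0 : ℝ),
      ∀ (k : ℕ) (t : Fin (k + 1) → ℝ), StrictMono t →
        t 0 = t₀ → t (Fin.last k) = T →
        (∀ i : Fin k, t i.succ - t i.castSucc < δ) →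
        ∀ y : Fin (k + 1) → (Fin n → ℝ), y 0 = x t₀ →
          (∀ i : Fin k, y i.succ =
            NormedSpace.exp ((t i.succ - t i.castSucc) • A (y i.castSucc))
              *ᵥ y i.castSucc) →
          ∀ i : Fin k, ∀ s ∈ Icc (t i.castSucc) (t i.succ),
            ‖NormedSpace.exp ((s - t i.castSucc) • A (y i.castSucc))
                *ᵥ y i.castSucc - x s‖ < ε := by
  intro ε hε
  have hxc : ContinuousOn x (Icc t₀ T) := fun s hs => (hx s hs).continuousAt.continuousWithinAt
  have hS : IsCompact (Metric.cthickening 1 (x '' Icc t₀ T)) :=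
    (isCompact_Icc.image_of_continuousOn hxc).cthickening
  obtain ⟨C, hC⟩ := isCompact_Icc.exists_bound_of_continuousOn hxc
  obtain ⟨M, hM⟩ := hS.exists_bound_of_continuousOn hAc.continuousOn
  obtain ⟨L, hL⟩ := Matrix.exists_lipschitzOnWith_of_isCompact hAl hS
  obtain ⟨w, hw, hG⟩ :=
    exists_pos_gronwallBound_lt (M.toNNReal + L * C) (L * C) (T - t₀) (lt_min hε one_pos)
  obtain ⟨δ, hδ, hxδ⟩ := Metric.uniformContinuousOn_iff_le.1
    (isCompact_Icc.uniformContinuousOn_of_continuous hxc) w hw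
  refine ⟨δ, hδ, fun k t ht ht₀ htT hmesh y hy₀ hy i s hs => ?_⟩
  calc _ ≤ gronwallBound 0 (M.toNNReal + L * C) (L * C * w) (T - t₀) :=
        norm_euler_exponential_sub_le hx (fun z hz => (hM z hz).trans M.le_coe_toNNReal) hL hC
          hxδ hw.le (hG.le.trans (min_le_right _ _)) ht.monotone ht₀ htT (fun i => (hmesh i).le)
          hy₀ hy i s hs
    _ < min ε 1 := hG
    _ ≤ ε := min_le_left _ _

/-- Convergence of the Euler-exponential approximations: if `x` solves `ẋ = A(x)x` on
`[t₀, T]` with `A` continuous (and locally Lipschitz), then for every `ε > 0` there is a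
mesh size `δ > 0` such that for every partition of `[t₀, T]` with mesh `< δ`, the
piecewise-exponential approximation stays within `ε` of `x` on all of `[t₀, T]`. -/
theorem euler_exponential_approximation_converges (n : ℕ)
    (A : (Fin n → ℝ) → Matrix (Fin n) (Fin n) ℝ)
    (hAc : Continuous A) (hAl : ∀ i j, LocallyLipschitz fun z => A z i j)
    (t₀ T : ℝ) (hT : t₀ < T)
    (x : ℝ → (Fin n → ℝ))
    (hx : ∀ t ∈ Icc t₀ T, HasDerivAt x (A (x t) *ᵥ x t) t) :
    ∀ ε > (0 : ℝ), ∃ δ > (0 : ℝ),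
      ∀ (k : ℕ) (t : Fin (k + 1) → ℝ), StrictMono t →
        t 0 = t₀ → t (Fin.last k) = T →
        (∀ i : Fin k, t i.succ - t i.castSucc < δ) →
        ∀ y : Fin (k + 1) → (Fin n → ℝ), y 0 = x t₀ →
          (∀ i : Fin k, y i.succ =
            NormedSpace.exp ((t i.succ - t i.castSucc) • A (y i.castSucc))
              *ᵥ y i.castSucc) →
          ∀ i : Fin k, ∀ s ∈ Icc (t i.castSucc) (t i.succ),
            ‖NormedSpace.exp ((s - t i.castSucc) • A (y i.castSucc))
                *ᵥ y i.castSucc - x s‖ < ε :=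
  euler_exponential_approximation_converges_general n A hAc hAl t₀ T x hx
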